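/- arXiv:math/0502482 — 3 statements merged into one kernel-verified Lean document; each statement's English description precedes it below -/
import Mathlib

section
/- (Polar decomposition, part b: surjectivity onto ℂPᴺ.) Let N ≥ 1. For every point p of the complex projective space ℂPᴺ = ℙ(ℂ^{N+1}) there exist θ ∈ ℝ and a matrix k in SU(N+1) of the block-diagonal form diag((det A)⁻¹, A) with A ∈ U(N), such that p is the projective class of the vector k · (cos θ, sin θ, 0, …, 0) ∈ ℂ^{N+1}. -/
open Matrix

/-- The block-diagonal matrix `diag(λ, A)` of size `(N+1) × (N+1)`. -/
def blkDiag {N : ℕ} (lam : ℂ) (A : Matrix (Fin N) (Fin N) ℂ) :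
    Matrix (Fin (N + 1)) (Fin (N + 1)) ℂ :=
  Matrix.of (Fin.cons (Fin.cons lam 0) (fun i => Fin.cons 0 (A i)))

/-- The vector `(cos θ, sin θ, 0, …, 0) ∈ ℂ^{N+1}` parametrizing the maximal torus. -/
noncomputable def torusVec (N : ℕ) (θ : ℝ) : Fin (N + 1) → ℂ :=
  fun i => if i = 0 then (Real.cos θ : ℂ) else if i = 1 then (Real.sin θ : ℂ) else 0

/-!
Write a representative of the point as `(x, w)` with `x ∈ ℂ`, `w ∈ ℂᴺ`. Complete `w / ‖w‖` (any
unit vector if `w = 0`) to a unitary `B`, and multiply its first column by a phase `μ` with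
`μ² · det B · x = ‖det B · x‖`. For `A = B · diag(μ, 1, …, 1)` and `θ` the argument of
`‖det B · x‖ + i‖w‖`, the vector `diag((det A)⁻¹, A) · (cos θ, sin θ, 0, …, 0)` is then a scalar
multiple of `(x, w)`.
-/

theorem blkDiag_mulVec_cons {N : ℕ} (lam : ℂ) (A : Matrix (Fin N) (Fin N) ℂ) (x : ℂ)
    (y : Fin N → ℂ) : blkDiag lam A *ᵥ Fin.cons x y = Fin.cons (lam * x) (A *ᵥ y) := by
  ext i
  refine Fin.cases ?_ (fun k => ?_) i <;>
    simp [blkDiag, mulVec, dotProduct, Fin.sum_univ_succ]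

theorem torusVec_eq_cons {N : ℕ} [NeZero N] (θ : ℝ) :
    torusVec N θ = Fin.cons (Real.cos θ : ℂ) (Pi.single 0 (Real.sin θ : ℂ)) := by
  ext i
  refine Fin.cases ?_ (fun k => ?_) i
  · simp [torusVec]
  · simp [torusVec, ← Fin.succ_zero_eq_one', Pi.single_apply]

theorem blkDiag_mulVec_torusVec {N : ℕ} [NeZero N] (lam : ℂ) (A : Matrix (Fin N) (Fin N) ℂ)
    (θ : ℝ) : blkDiag lam A *ᵥ torusVec N θ =
      Fin.cons (lam * Real.cos θ) (fun i => A i 0 * Real.sin θ) := by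
  rw [torusVec_eq_cons, blkDiag_mulVec_cons, mulVec_single]
  rfl

theorem Matrix.diagonal_mem_unitaryGroup {n α : Type*} [Fintype n] [DecidableEq n] [CommRing α]
    [StarRing α] {d : n → α} (hd : ∀ i, d i ∈ unitary α) : diagonal d ∈ unitaryGroup n α := by
  rw [mem_unitaryGroup_iff', star_eq_conjTranspose, diagonal_conjTranspose,
    diagonal_mul_diagonal, ← diagonal_one]
  exact congrArg diagonal (funext fun i => Unitary.star_mul_self_of_mem (hd i))

theorem Complex.exists_mem_unitary_sq_mul_eq_norm (z : ℂ) :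
    ∃ μ ∈ unitary ℂ, μ ^ 2 * z = ‖z‖ := by
  refine ⟨exp (-(arg z / 2 : ℝ) * I), ?_, ?_⟩
  · rw [Unitary.mem_iff, star_def, ← exp_conj, ← exp_add, ← exp_add]
    simp [map_ofNat]
  · nth_rewrite 2 [← norm_mul_exp_arg_mul_I z]
    rw [← exp_nat_mul, mul_left_comm, ← exp_add]
    push_cast
    ring_nf
    simp

theorem exists_norm_eq_one_smul_eq {𝕜 E : Type*} [RCLike 𝕜] [NormedAddCommGroup E]
    [NormedSpace 𝕜 E] [Nontrivial E] (w : E) : ∃ u : E, ‖u‖ = 1 ∧ (‖w‖ : 𝕜) • u = w := by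
  rcases eq_or_ne w 0 with rfl | hw
  · obtain ⟨v, hv⟩ := exists_ne (0 : E)
    exact ⟨_, norm_smul_inv_norm (𝕜 := 𝕜) hv, by simp⟩
  · refine ⟨(‖w‖⁻¹ : 𝕜) • w, norm_smul_inv_norm hw, ?_⟩
    rw [smul_smul, mul_inv_cancel₀ (by simpa using hw), one_smul]

theorem exists_mem_unitaryGroup_apply_eq {𝕜 n : Type*} [RCLike 𝕜] [Fintype n] [DecidableEq n]
    (j : n) (u : EuclideanSpace 𝕜 n) (hu : ‖u‖ = 1) :
    ∃ A ∈ unitaryGroup n 𝕜, ∀ i, A i j = u i := by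
  have hcard : Module.finrank 𝕜 (EuclideanSpace 𝕜 n) = Fintype.card n := by simp
  have horth : Orthonormal 𝕜 (({j} : Set n).domRestrict fun _ => u) :=
    ⟨fun _ => hu, fun a b hab => absurd (Subtype.ext (a.2.trans b.2.symm)) hab⟩
  obtain ⟨b, hb⟩ := horth.exists_orthonormalBasis_extension_of_card_eq hcard
  refine ⟨(EuclideanSpace.basisFun n 𝕜).toBasis.toMatrix b,
    (EuclideanSpace.basisFun n 𝕜).toMatrix_orthonormalBasis_mem_unitary b, fun i => ?_⟩
  simp [Module.Basis.toMatrix_apply, hb j rfl]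

theorem exists_smul_blkDiag_mulVec_torusVec_eq {N : ℕ} [NeZero N] (x : ℂ) (w : Fin N → ℂ) :
    ∃ (θ : ℝ), ∃ A ∈ unitaryGroup (Fin N) ℂ, ∃ c : ℂ,
      c • (blkDiag A.det⁻¹ A *ᵥ torusVec N θ) = Fin.cons x w := by
  obtain ⟨u, hu, hwu⟩ := exists_norm_eq_one_smul_eq (𝕜 := ℂ) (WithLp.toLp 2 w)
  obtain ⟨B, hB, hBu⟩ := exists_mem_unitaryGroup_apply_eq 0 u hu
  obtain ⟨μ, hμ, hμx⟩ := Complex.exists_mem_unitary_sq_mul_eq_norm (B.det * x)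
  have hμ0 : μ ≠ 0 := left_ne_zero_of_mul_eq_one (Unitary.mul_star_self_of_mem hμ)
  have hB0 : B.det ≠ 0 :=
    left_ne_zero_of_mul_eq_one (Unitary.mul_star_self_of_mem (det_of_mem_unitary hB))
  set A := B * diagonal (Function.update 1 0 μ)
  have hA : A ∈ unitaryGroup (Fin N) ℂ := by
    refine mul_mem hB (diagonal_mem_unitaryGroup ?_)
    rw [Function.forall_update_iff]
    exact ⟨hμ, fun _ _ => one_mem _⟩
  have hdet : A.det = B.det * μ := by
    simp [A, det_mul, det_diagonal, Finset.prod_update_of_mem]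
  have hcol : ∀ i, A i 0 = u i * μ := by simp [A, mul_diagonal, hBu]
  set ρ : ℂ := ⟨‖B.det * x‖, ‖WithLp.toLp 2 w‖⟩
  have hcos : (‖ρ‖ : ℂ) * Real.cos (Complex.arg ρ) = ‖B.det * x‖ := by
    exact_mod_cast Complex.norm_mul_cos_arg ρ
  have hsin : (‖ρ‖ : ℂ) * Real.sin (Complex.arg ρ) = ‖WithLp.toLp 2 w‖ := by
    exact_mod_cast Complex.norm_mul_sin_arg ρ
  refine ⟨Complex.arg ρ, A, hA, ‖ρ‖ / μ, ?_⟩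
  rw [blkDiag_mulVec_torusVec, hdet]
  ext i
  refine Fin.cases ?_ (fun k => ?_) i
  · simp only [Pi.smul_apply, Fin.cons_zero, smul_eq_mul]
    field_simp
    linear_combination hcos - hμx
  · have hk := congrArg (· k) hwu
    simp only [PiLp.smul_apply, smul_eq_mul] at hk
    simp only [Pi.smul_apply, Fin.cons_succ, smul_eq_mul, hcol]
    field_simp
    linear_combination u k * hsin + hk

/-- Polar decomposition, part b: every point of `ℂPᴺ` is the projective class of
`k · (cos θ, sin θ, 0, …, 0)` for some `θ ∈ ℝ` and some `k = diag((det A)⁻¹, A) ∈ K₀`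
with `A ∈ U(N)`. -/
theorem polar_decomposition_CPn (N : ℕ) (hN : 1 ≤ N)
    (p : Projectivization ℂ (Fin (N + 1) → ℂ)) :
    ∃ (θ : ℝ) (A : Matrix (Fin N) (Fin N) ℂ)
      (_ : A ∈ Matrix.unitaryGroup (Fin N) ℂ)
      (h : (blkDiag (A.det)⁻¹ A).mulVec (torusVec N θ) ≠ 0),
      p = Projectivization.mk ℂ ((blkDiag (A.det)⁻¹ A).mulVec (torusVec N θ)) h := by
  have : NeZero N := NeZero.of_pos hN
  obtain ⟨θ, A, hA, c, hc⟩ := exists_smul_blkDiag_mulVec_torusVec_eq (p.rep 0) (Fin.tail p.rep)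
  rw [Fin.cons_self_tail] at hc
  have hx : blkDiag A.det⁻¹ A *ᵥ torusVec N θ ≠ 0 := by
    intro h
    rw [h, smul_zero] at hc
    exact p.rep_nonzero hc.symm
  refine ⟨θ, A, hA, hx, ?_⟩
  conv_lhs => rw [← p.mk_rep]
  exact (Projectivization.mk_eq_mk_iff' ℂ _ _ _ hx).mpr ⟨c, hc⟩
end

section
/- (Induced metric for the ℂP¹ model.) Let Ω ⊆ ℂ be open and let W : Ω → ℂ be continuously differentiable. Define f := (1, W) : Ω → ℂ², P := 1₂ − (f·fᴴ)/(1+|W|²), and K := [∂̄P, P]. Then at every point of Ω: tr(Kᴴ·K) = (|∂W|² + |∂̄W|²)/(1+|W|²)² and tr(Kᴴ·Kᴴ) = −2·∂W·conj(∂̄W)/(1+|W|²)². In particular, if W is holomorphic (∂̄W = 0), then tr(KᴴKᴴ) = 0 and tr(KᴴK) = |∂W|²/(1+|W|²)², so the associated immersion is conformal. -/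
open Matrix Complex

attribute [local instance] Matrix.frobeniusNormedAddCommGroup Matrix.frobeniusNormedSpace

/-- The Wirtinger derivative `∂F(ξ) = (1/2)(DF(ξ)(1) − i·DF(ξ)(i))`. -/
noncomputable def wd {E : Type*} [NormedAddCommGroup E] [NormedSpace ℂ E]
    (F : ℂ → E) (ξ : ℂ) : E :=
  (2 : ℂ)⁻¹ • (fderiv ℝ F ξ 1 - Complex.I • fderiv ℝ F ξ Complex.I)

/-- The Wirtinger derivative `∂̄F(ξ) = (1/2)(DF(ξ)(1) + i·DF(ξ)(i))`. -/
noncomputable def wdbar {E : Type*} [NormedAddCommGroup E] [NormedSpace ℂ E]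
    (F : ℂ → E) (ξ : ℂ) : E :=
  (2 : ℂ)⁻¹ • (fderiv ℝ F ξ 1 + Complex.I • fderiv ℝ F ξ Complex.I)

/-!
Write `w = W ξ`, `a = ∂W(ξ)`, `b = ∂̄W(ξ)`, `s = 1 + |w|²`, `f = (1, w)` and `u = (w̄, −1)`.
Then `fᴴu = 0`, `|f|² = |u|² = s`, and `P = u uᴴ / s` is the orthogonal projector onto `u`.
The quotient rule gives `∂̄P` explicitly, and a direct computation collapses the commutator to
`K = (ā f uᴴ − b u fᴴ) / s²`. By orthogonality the cross terms of `KᴴK` and `KᴴKᴴ` vanish, and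
the remaining terms are multiples of `u uᴴ` and `f fᴴ`, whose traces are `s`.
-/

open ComplexConjugate

section Wirtinger

variable {E : Type*} [NormedAddCommGroup E] [NormedSpace ℂ E] {ξ : ℂ}

theorem wdbar_const (c : E) : wdbar (fun _ => c) ξ = 0 := by
  simp [wdbar]

theorem wdbar_const_add (c : E) (F : ℂ → E) : wdbar (fun x => c + F x) ξ = wdbar F ξ := by
  simp only [wdbar, fderiv_const_add]

theorem wdbar_neg (F : ℂ → E) : wdbar (fun x => -F x) ξ = -wdbar F ξ := by
  simp only [wdbar, fderiv_fun_neg, _root_.neg_apply, smul_neg, ← neg_add]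

theorem wdbar_smul {c : ℂ → ℂ} {F : ℂ → E} (hc : DifferentiableAt ℝ c ξ)
    (hF : DifferentiableAt ℝ F ξ) :
    wdbar (fun x => c x • F x) ξ = wdbar c ξ • F ξ + c ξ • wdbar F ξ := by
  simp only [wdbar, fderiv_fun_smul hc hF, _root_.add_apply, _root_.smul_apply,
    ContinuousLinearMap.smulRight_apply, smul_eq_mul]
  module

theorem wdbar_mul {F G : ℂ → ℂ} (hF : DifferentiableAt ℝ F ξ) (hG : DifferentiableAt ℝ G ξ) :
    wdbar (fun x => F x * G x) ξ = wdbar F ξ * G ξ + F ξ * wdbar G ξ :=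
  wdbar_smul hF hG

theorem wdbar_conj (F : ℂ → ℂ) : wdbar (fun x => conj (F x)) ξ = conj (wd F ξ) := by
  simp only [wdbar, wd, ← Complex.star_def, fderiv_star, ContinuousLinearMap.comp_apply,
    ContinuousLinearEquiv.coe_coe, starL'_apply, smul_eq_mul, star_mul', star_sub, star_inv₀]
  simp [Complex.conj_I]

theorem wdbar_inv {F : ℂ → ℂ} (hF : DifferentiableAt ℝ F ξ) (h0 : F ξ ≠ 0) :
    wdbar (fun x => (F x)⁻¹) ξ = -wdbar F ξ / F ξ ^ 2 := by
  have hchain : fderiv ℝ (fun x => (F x)⁻¹) ξ = (fderiv ℝ Inv.inv (F ξ)).comp (fderiv ℝ F ξ) :=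
    fderiv_comp ξ (differentiableAt_inv h0) hF
  simp only [wdbar, hchain, fderiv_inv' h0, ContinuousLinearMap.comp_apply, _root_.neg_apply,
    ContinuousLinearMap.mulLeftRight_apply, smul_eq_mul]
  field_simp
  ring

theorem wdbar_normSq {F : ℂ → ℂ} (hF : DifferentiableAt ℝ F ξ) :
    wdbar (fun x => (normSq (F x) : ℂ)) ξ = wdbar F ξ * conj (F ξ) + F ξ * conj (wd F ξ) := by
  simp_rw [← Complex.mul_conj]
  rw [wdbar_mul hF (by fun_prop), wdbar_conj]

/-- The ascription makes `wdbar` use the Frobenius norm on matrices (as in the statement) rather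
than the sup norm of the underlying function type. -/
theorem wdbar_matrix_apply {m n : Type*} [Fintype m] [Fintype n] [DecidableEq m] [DecidableEq n]
    {P : ℂ → Matrix m n ℂ} (hP : ∀ i j, DifferentiableAt ℝ (fun x => P x i j) ξ) (i : m) (j : n) :
    (wdbar P ξ : Matrix m n ℂ) i j = wdbar (fun x => P x i j) ξ := by
  have hsum : P = fun x => ∑ k, ∑ l, P x k l • single k l (1 : ℂ) := by
    funext x
    conv_lhs => rw [matrix_eq_sum_single (P x)]
    simp only [smul_single, smul_eq_mul, mul_one]
  have hderiv := HasFDerivAt.fun_sum (u := Finset.univ) fun k _ =>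
    HasFDerivAt.fun_sum (u := Finset.univ) fun l _ =>
      (hP k l).hasFDerivAt.smul_const (single k l (1 : ℂ))
  rw [← hsum] at hderiv
  rw [wdbar, wdbar, hderiv.fderiv]
  simp [Matrix.sum_apply, Matrix.single_apply, ite_and, Finset.sum_ite_eq']

end Wirtinger

section Orthogonal

variable {n R : Type*} [Fintype n] [CommRing R] [StarRing R] {f u : n → R}

theorem trace_conjTranspose_mul_self_of_orthogonal (h : star f ⬝ᵥ u = 0) (α β : R) :
    ((α • vecMulVec f (star u) - β • vecMulVec u (star f))ᴴ *
        (α • vecMulVec f (star u) - β • vecMulVec u (star f))).trace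
      = (star α * α + star β * β) * (star f ⬝ᵥ f) * (star u ⬝ᵥ u) := by
  have h' : star u ⬝ᵥ f = 0 := by rw [star_dotProduct, h, star_zero]
  simp only [conjTranspose_sub, conjTranspose_smul, conjTranspose_vecMulVec, star_star, sub_mul,
    mul_sub, smul_mul_smul_comm, vecMulVec_mul_vecMulVec, trace_sub, trace_smul, trace_vecMulVec,
    dotProduct_smul, h, h', zero_smul, smul_eq_mul, dotProduct_zero]
  rw [dotProduct_comm u (star u), dotProduct_comm f (star f)]
  ring

theorem trace_conjTranspose_mul_conjTranspose_of_orthogonal (h : star f ⬝ᵥ u = 0) (α β : R) :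
    ((α • vecMulVec f (star u) - β • vecMulVec u (star f))ᴴ *
        (α • vecMulVec f (star u) - β • vecMulVec u (star f))ᴴ).trace
      = -2 * star α * star β * (star f ⬝ᵥ f) * (star u ⬝ᵥ u) := by
  have h' : star u ⬝ᵥ f = 0 := by rw [star_dotProduct, h, star_zero]
  simp only [conjTranspose_sub, conjTranspose_smul, conjTranspose_vecMulVec, star_star, sub_mul,
    mul_sub, smul_mul_smul_comm, vecMulVec_mul_vecMulVec, trace_sub, trace_smul, trace_vecMulVec,
    dotProduct_smul, h, h', zero_smul, smul_eq_mul, dotProduct_zero]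
  rw [dotProduct_comm u (star u), dotProduct_comm f (star f)]
  ring

end Orthogonal

theorem one_add_normSq_ne_zero (w : ℂ) : 1 + (normSq w : ℂ) ≠ 0 := by
  exact_mod_cast (add_pos_of_pos_of_nonneg one_pos (normSq_nonneg w)).ne'

namespace CP1

def vec (w : ℂ) : Fin 2 → ℂ := ![1, w]

def perpVec (w : ℂ) : Fin 2 → ℂ := ![conj w, -1]

noncomputable def projector (w : ℂ) : Matrix (Fin 2) (Fin 2) ℂ :=
  1 - (1 + (normSq w : ℂ))⁻¹ • vecMulVec (vec w) (star (vec w))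

/-- The value of `∂̄P` where `W = w`, `∂W = a`, `∂̄W = b`: the quotient rule applied to
`P = u uᴴ / s`, with `d = ∂̄s`. -/
noncomputable def projectorDbar (w a b : ℂ) : Matrix (Fin 2) (Fin 2) ℂ :=
  let s := 1 + (normSq w : ℂ)
  let d := b * conj w + w * conj a
  (s ^ 2)⁻¹ • !![d, conj w * d - s * conj a; w * d - s * b, -d]

noncomputable def dbarCommutator (w a b : ℂ) : Matrix (Fin 2) (Fin 2) ℂ :=
  (conj a / (1 + (normSq w : ℂ)) ^ 2) • vecMulVec (vec w) (star (perpVec w))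
    - (b / (1 + (normSq w : ℂ)) ^ 2) • vecMulVec (perpVec w) (star (vec w))

theorem star_vec_dotProduct_perpVec (w : ℂ) : star (vec w) ⬝ᵥ perpVec w = 0 := by
  simp [vec, perpVec, dotProduct, Fin.sum_univ_two]

theorem star_vec_dotProduct_self (w : ℂ) : star (vec w) ⬝ᵥ vec w = 1 + (normSq w : ℂ) := by
  simp [vec, dotProduct, Fin.sum_univ_two, ← Complex.mul_conj, mul_comm]

theorem star_perpVec_dotProduct_self (w : ℂ) :
    star (perpVec w) ⬝ᵥ perpVec w = 1 + (normSq w : ℂ) := by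
  simp [perpVec, dotProduct, Fin.sum_univ_two, ← Complex.mul_conj, add_comm]

theorem vecMulVec_perpVec (w : ℂ) :
    vecMulVec (perpVec w) (star (perpVec w)) = !![conj w * w, -conj w; -w, 1] := by
  ext i j
  fin_cases i <;> fin_cases j <;> simp [perpVec, -cons_vecMulVec, vecMulVec_apply]

theorem projector_eq (w : ℂ) :
    projector w = (1 + (normSq w : ℂ))⁻¹ • vecMulVec (perpVec w) (star (perpVec w)) := by
  have hs := one_add_normSq_ne_zero w
  rw [← Complex.mul_conj] at hs
  ext i j
  fin_cases i <;> fin_cases j <;>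
    simp [projector, vec, perpVec, -cons_vecMulVec, vecMulVec_apply, one_apply,
      ← Complex.mul_conj] <;>
    field_simp <;> ring

theorem wdbar_projector_comp {W : ℂ → ℂ} {ξ : ℂ} (hW : DifferentiableAt ℝ W ξ) :
    wdbar (fun x => projector (W x)) ξ = projectorDbar (W ξ) (wd W ξ) (wdbar W ξ) := by
  set s : ℂ → ℂ := fun x => 1 + (normSq (W x) : ℂ) with hs_def
  have hs : DifferentiableAt ℝ s ξ := by
    simp_rw [hs_def, ← Complex.mul_conj]; fun_prop
  have hs0 : s ξ ≠ 0 := one_add_normSq_ne_zero (W ξ)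
  have hsinv : DifferentiableAt ℝ (fun x => (s x)⁻¹) ξ := hs.inv hs0
  have hdsinv : wdbar (fun x => (s x)⁻¹) ξ
      = -(wdbar W ξ * conj (W ξ) + W ξ * conj (wd W ξ)) / s ξ ^ 2 := by
    rw [wdbar_inv hs hs0, hs_def, wdbar_const_add, wdbar_normSq hW]
  have hentry : ∀ i j, (fun x => projector (W x) i j)
      = fun x => (s x)⁻¹ • (vecMulVec (perpVec (W x)) (star (perpVec (W x)))) i j := by
    intro i j; simp_rw [projector_eq]; rfl
  have hN : ∀ i j, DifferentiableAt ℝ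
      (fun x => vecMulVec (perpVec (W x)) (star (perpVec (W x))) i j) ξ := by
    intro i j
    fin_cases i <;> fin_cases j <;> simp [perpVec, vecMulVec_apply] <;> fun_prop
  have hP : ∀ i j, DifferentiableAt ℝ (fun x => projector (W x) i j) ξ := fun i j => by
    rw [hentry]; exact hsinv.smul (hN i j)
  have hsξ : s ξ = 1 + W ξ * conj (W ξ) := by rw [Complex.mul_conj]
  ext i j
  rw [wdbar_matrix_apply hP, hentry, wdbar_smul hsinv (hN i j), hdsinv, hsξ]
  rw [hsξ] at hs0
  fin_cases i <;> fin_cases j <;>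
    simp (disch := fun_prop) [perpVec, projectorDbar, -cons_vecMulVec, vecMulVec_apply,
      wdbar_mul, wdbar_conj, wdbar_neg, wdbar_const, ← Complex.mul_conj] <;>
    field_simp <;> ring

theorem projectorDbar_mul_sub_mul (w a b : ℂ) :
    projectorDbar w a b * projector w - projector w * projectorDbar w a b
      = dbarCommutator w a b := by
  have hcomm : ∀ (x y : ℂ) (A B : Matrix (Fin 2) (Fin 2) ℂ),
      (x • A) * (y • B) - (y • B) * (x • A) = (x * y) • (A * B - B * A) := by
    intro x y A B
    rw [smul_mul_smul_comm, smul_mul_smul_comm, mul_comm y x, smul_sub]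
  have hs : 1 + (normSq w : ℂ) ≠ 0 := one_add_normSq_ne_zero w
  rw [projector_eq, projectorDbar, dbarCommutator, vecMulVec_perpVec, hcomm]
  set s := 1 + (normSq w : ℂ) with hs_def
  set d := b * conj w + w * conj a with hd_def
  have hMN : !![d, conj w * d - s * conj a; w * d - s * b, -d] * !![conj w * w, -conj w; -w, 1]
      - !![conj w * w, -conj w; -w, 1] * !![d, conj w * d - s * conj a; w * d - s * b, -d]
      = s • (conj a • vecMulVec (vec w) (star (perpVec w))
        - b • vecMulVec (perpVec w) (star (vec w))) := by
    rw [hd_def, hs_def, ← Complex.mul_conj]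
    ext i j
    fin_cases i <;> fin_cases j <;>
      simp [vec, perpVec, -cons_vecMulVec, vecMulVec_apply] <;> ring
  rw [hMN, smul_smul, smul_sub, smul_smul, smul_smul]
  congr 2 <;> field_simp

theorem trace_conjTranspose_mul_self_dbarCommutator (w a b : ℂ) :
    ((dbarCommutator w a b)ᴴ * dbarCommutator w a b).trace
      = ((normSq a + normSq b : ℝ) : ℂ) / (1 + (normSq w : ℂ)) ^ 2 := by
  have hs := one_add_normSq_ne_zero w
  rw [dbarCommutator, trace_conjTranspose_mul_self_of_orthogonal (star_vec_dotProduct_perpVec w),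
    star_vec_dotProduct_self, star_perpVec_dotProduct_self]
  simp only [Complex.star_def, map_div₀, map_pow, map_add, map_one, Complex.conj_ofReal,
    Complex.conj_conj]
  push_cast
  rw [← Complex.mul_conj a, ← Complex.mul_conj b]
  field_simp

theorem trace_conjTranspose_mul_conjTranspose_dbarCommutator (w a b : ℂ) :
    ((dbarCommutator w a b)ᴴ * (dbarCommutator w a b)ᴴ).trace
      = -2 * a * conj b / (1 + (normSq w : ℂ)) ^ 2 := by
  have hs := one_add_normSq_ne_zero w
  rw [dbarCommutator,
    trace_conjTranspose_mul_conjTranspose_of_orthogonal (star_vec_dotProduct_perpVec w),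
    star_vec_dotProduct_self, star_perpVec_dotProduct_self]
  simp only [Complex.star_def, map_div₀, map_pow, map_add, map_one, Complex.conj_ofReal,
    Complex.conj_conj]
  field_simp

end CP1

/-- Induced metric for the `ℂP¹` model: with `f = (1, W)`, `P = 1₂ − (f·fᴴ)/(1+|W|²)` and
`K = [∂̄P, P]`, one has `tr(KᴴK) = (|∂W|² + |∂̄W|²)/(1+|W|²)²` and
`tr(KᴴKᴴ) = −2 ∂W conj(∂̄W)/(1+|W|²)²`; in particular, for holomorphic `W` the
associated immersion is conformal. -/
theorem metric_of_CP1_immersion (Ω : Set ℂ) (hΩ : IsOpen Ω)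
    (W : ℂ → ℂ) (hW : ContDiffOn ℝ 1 W Ω)
    (f : ℂ → Fin 2 → ℂ) (hf : f = fun ξ => ![1, W ξ])
    (P : ℂ → Matrix (Fin 2) (Fin 2) ℂ)
    (hP : P = fun ξ => 1 - ((1 : ℂ) + (Complex.normSq (W ξ) : ℂ))⁻¹
      • Matrix.vecMulVec (f ξ) (star (f ξ)))
    (K : ℂ → Matrix (Fin 2) (Fin 2) ℂ)
    (hK : K = fun ξ => wdbar P ξ * P ξ - P ξ * wdbar P ξ) :
    (∀ ξ ∈ Ω,
      ((K ξ)ᴴ * K ξ).trace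
        = ((Complex.normSq (wd W ξ) + Complex.normSq (wdbar W ξ) : ℝ) : ℂ)
          / ((1 : ℂ) + (Complex.normSq (W ξ) : ℂ)) ^ 2 ∧
      ((K ξ)ᴴ * (K ξ)ᴴ).trace
        = -2 * wd W ξ * (starRingEnd ℂ) (wdbar W ξ)
          / ((1 : ℂ) + (Complex.normSq (W ξ) : ℂ)) ^ 2) ∧
    ((∀ ξ ∈ Ω, wdbar W ξ = 0) →
      ∀ ξ ∈ Ω,
        ((K ξ)ᴴ * (K ξ)ᴴ).trace = 0 ∧
        ((K ξ)ᴴ * K ξ).trace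
          = ((Complex.normSq (wd W ξ) : ℝ) : ℂ)
            / ((1 : ℂ) + (Complex.normSq (W ξ) : ℂ)) ^ 2) := by
  have hPW : P = fun x => CP1.projector (W x) := by rw [hP, hf]; rfl
  have traces : ∀ ξ ∈ Ω,
      ((K ξ)ᴴ * K ξ).trace
        = ((Complex.normSq (wd W ξ) + Complex.normSq (wdbar W ξ) : ℝ) : ℂ)
          / ((1 : ℂ) + (Complex.normSq (W ξ) : ℂ)) ^ 2 ∧
      ((K ξ)ᴴ * (K ξ)ᴴ).trace
        = -2 * wd W ξ * (starRingEnd ℂ) (wdbar W ξ)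
          / ((1 : ℂ) + (Complex.normSq (W ξ) : ℂ)) ^ 2 := by
    intro ξ hξ
    have hWξ : DifferentiableAt ℝ W ξ :=
      (hW.differentiableOn one_ne_zero).differentiableAt (hΩ.mem_nhds hξ)
    have hKξ : K ξ = CP1.dbarCommutator (W ξ) (wd W ξ) (wdbar W ξ) := by
      simp only [hK, hPW]
      rw [CP1.wdbar_projector_comp hWξ, CP1.projectorDbar_mul_sub_mul]
    rw [hKξ]
    exact ⟨CP1.trace_conjTranspose_mul_self_dbarCommutator _ _ _,
      CP1.trace_conjTranspose_mul_conjTranspose_dbarCommutator _ _ _⟩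
  refine ⟨traces, fun hhol ξ hξ => ?_⟩
  obtain ⟨h1, h2⟩ := traces ξ hξ
  rw [hhol ξ hξ] at h1 h2
  exact ⟨by simpa using h2, by simpa using h1⟩
end

section
/- The pair of functions W₁(ξ) = (ξ + conj(ξ))/(1 − |ξ|²) and W₂(ξ) = (conj(ξ) − ξ)/(1 − |ξ|²), defined on the open unit disc {ξ ∈ ℂ : |ξ| < 1}, satisfies the ℂP² sigma model Euler–Lagrange equations: ∂∂̄W₁ − (2·conj(W₁)/A)·∂W₁·∂̄W₁ − (conj(W₂)/A)·(∂W₁·∂̄W₂ + ∂̄W₁·∂W₂) = 0 and ∂∂̄W₂ − (2·conj(W₂)/A)·∂W₂·∂̄W₂ − (conj(W₁)/A)·(∂W₁·∂̄W₂ + ∂̄W₁·∂W₂) = 0, where A = 1 + |W₁|² + |W₂|². -/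
/-!
The real derivative of a map `ℂ → ℂ` at a point is `v ↦ a v + b v̄` with `a = ∂F`, `b = ∂̄F`, so
carrying the pair `(a, b)` through the sum, product, power and quotient rules is Wirtinger calculus.
Both `W₁` and `W₂` belong to the family `W_s z = (s z + z̄) / (1 - |z|²)` (with `s = 1` and `s = -1`),
for which `∂W_s = (s + z̄²)/D²`, `∂̄W_s = (1 + s z²)/D²` and `∂∂̄W_s = 2 (s z + z̄)/D³`, where
`D = 1 - |z|²`; moreover `1 + |W₁|² + |W₂|² = (1 + |z|²)² / D²`. Substituting these, both
Euler–Lagrange equations become identities between rational functions of `z` and `z̄`.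
-/

open Complex

open ComplexConjugate Metric

noncomputable def wirtingerCLM (a b : ℂ) : ℂ →L[ℝ] ℂ :=
  a • ContinuousLinearMap.id ℝ ℂ + b • conjCLE.toContinuousLinearMap

@[simp]
lemma wirtingerCLM_apply (a b v : ℂ) : wirtingerCLM a b v = a * v + b * conj v := by
  simp [wirtingerCLM]

lemma HasFDerivAt.wd_eq {F : ℂ → ℂ} {ξ a b : ℂ} (h : HasFDerivAt F (wirtingerCLM a b) ξ) :
    wd F ξ = a := by
  simp only [wd, h.fderiv, wirtingerCLM_apply, smul_eq_mul, map_one, conj_I]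
  linear_combination (-a + b) / 2 * I_mul_I

lemma HasFDerivAt.wdbar_eq {F : ℂ → ℂ} {ξ a b : ℂ} (h : HasFDerivAt F (wirtingerCLM a b) ξ) :
    wdbar F ξ = b := by
  simp only [wdbar, h.fderiv, wirtingerCLM_apply, smul_eq_mul, map_one, conj_I]
  linear_combination (a - b) / 2 * I_mul_I

section WirtingerCalculus

variable {f g : ℂ → ℂ} {ξ a b c d : ℂ}

lemma hasFDerivAt_wirtinger_id (ξ : ℂ) : HasFDerivAt (fun z : ℂ => z) (wirtingerCLM 1 0) ξ :=
  (hasFDerivAt_id ξ).congr_fderiv (by ext; simp)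

lemma hasFDerivAt_wirtinger_conj (ξ : ℂ) : HasFDerivAt (fun z : ℂ => conj z) (wirtingerCLM 0 1) ξ :=
  conjCLE.hasFDerivAt.congr_fderiv (by ext; simp)

lemma hasFDerivAt_wirtinger_const (c ξ : ℂ) : HasFDerivAt (fun _ : ℂ => c) (wirtingerCLM 0 0) ξ :=
  (hasFDerivAt_const c ξ).congr_fderiv (by ext; simp)

lemma HasFDerivAt.wirtinger_add (hf : HasFDerivAt f (wirtingerCLM a b) ξ)
    (hg : HasFDerivAt g (wirtingerCLM c d) ξ) :
    HasFDerivAt (fun z => f z + g z) (wirtingerCLM (a + c) (b + d)) ξ :=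
  (hf.add hg).congr_fderiv (by ext; simp; ring)

lemma HasFDerivAt.wirtinger_sub (hf : HasFDerivAt f (wirtingerCLM a b) ξ)
    (hg : HasFDerivAt g (wirtingerCLM c d) ξ) :
    HasFDerivAt (fun z => f z - g z) (wirtingerCLM (a - c) (b - d)) ξ :=
  (hf.sub hg).congr_fderiv (by ext; simp; ring)

lemma HasFDerivAt.wirtinger_mul (hf : HasFDerivAt f (wirtingerCLM a b) ξ)
    (hg : HasFDerivAt g (wirtingerCLM c d) ξ) :
    HasFDerivAt (fun z => f z * g z) (wirtingerCLM (a * g ξ + f ξ * c) (b * g ξ + f ξ * d)) ξ :=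
  (hf.mul hg).congr_fderiv (by ext; simp; ring)

lemma HasFDerivAt.wirtinger_pow (hf : HasFDerivAt f (wirtingerCLM a b) ξ) (n : ℕ) :
    HasFDerivAt (fun z => f z ^ n)
      (wirtingerCLM (n * f ξ ^ (n - 1) * a) (n * f ξ ^ (n - 1) * b)) ξ :=
  (hf.pow n).congr_fderiv (by ext; simp; ring)

lemma HasFDerivAt.wirtinger_inv (hf : HasFDerivAt f (wirtingerCLM a b) ξ) (hξ : f ξ ≠ 0) :
    HasFDerivAt (fun z => (f z)⁻¹) (wirtingerCLM (-a / f ξ ^ 2) (-b / f ξ ^ 2)) ξ :=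
  ((hasFDerivAt_inv' hξ).comp ξ hf).congr_fderiv (by ext; simp; field_simp; ring)

lemma HasFDerivAt.wirtinger_div (hf : HasFDerivAt f (wirtingerCLM a b) ξ)
    (hg : HasFDerivAt g (wirtingerCLM c d) ξ) (hξ : g ξ ≠ 0) :
    HasFDerivAt (fun z => f z / g z)
      (wirtingerCLM ((a * g ξ - f ξ * c) / g ξ ^ 2) ((b * g ξ - f ξ * d) / g ξ ^ 2)) ξ := by
  simp only [div_eq_mul_inv]
  exact (hf.wirtinger_mul (hg.wirtinger_inv hξ)).congr_fderiv (by congr 1 <;> (field_simp; ring))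

end WirtingerCalculus

noncomputable def mixedW (s z : ℂ) : ℂ := (s * z + conj z) / (1 - z * conj z)

lemma one_sub_mul_conj_ne_zero {z : ℂ} (hz : z ∈ ball (0 : ℂ) 1) : 1 - z * conj z ≠ 0 := by
  rw [mul_conj, ← ofReal_one, ← ofReal_sub, ofReal_ne_zero, normSq_eq_norm_sq]
  have : ‖z‖ < 1 := mem_ball_zero_iff.mp hz
  nlinarith [norm_nonneg z]

lemma one_add_mul_conj_ne_zero (z : ℂ) : 1 + z * conj z ≠ 0 := by
  rw [mul_conj, ← ofReal_one, ← ofReal_add, ofReal_ne_zero]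
  linarith [normSq_nonneg z]

lemma hasFDerivAt_one_sub_mul_conj (z : ℂ) :
    HasFDerivAt (fun w => 1 - w * conj w) (wirtingerCLM (-conj z) (-z)) z :=
  ((hasFDerivAt_wirtinger_const 1 z).wirtinger_sub
    ((hasFDerivAt_wirtinger_id z).wirtinger_mul (hasFDerivAt_wirtinger_conj z))).congr_fderiv
    (by congr 1 <;> ring)

section MixedW

variable (s : ℂ) {z : ℂ}

lemma hasFDerivAt_mixedW (hz : z ∈ ball (0 : ℂ) 1) :
    HasFDerivAt (mixedW s)
      (wirtingerCLM ((s + conj z ^ 2) / (1 - z * conj z) ^ 2)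
        ((1 + s * z ^ 2) / (1 - z * conj z) ^ 2)) z := by
  have hnum := ((hasFDerivAt_wirtinger_const s z).wirtinger_mul
    (hasFDerivAt_wirtinger_id z)).wirtinger_add (hasFDerivAt_wirtinger_conj z)
  exact (hnum.wirtinger_div (hasFDerivAt_one_sub_mul_conj z)
    (one_sub_mul_conj_ne_zero hz)).congr_fderiv (by congr 1 <;> ring)

lemma wd_mixedW (hz : z ∈ ball (0 : ℂ) 1) :
    wd (mixedW s) z = (s + conj z ^ 2) / (1 - z * conj z) ^ 2 :=
  (hasFDerivAt_mixedW s hz).wd_eq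

lemma wdbar_mixedW (hz : z ∈ ball (0 : ℂ) 1) :
    wdbar (mixedW s) z = (1 + s * z ^ 2) / (1 - z * conj z) ^ 2 :=
  (hasFDerivAt_mixedW s hz).wdbar_eq

lemma wd_wdbar_mixedW (hz : z ∈ ball (0 : ℂ) 1) :
    wd (wdbar (mixedW s)) z = 2 * (s * z + conj z) / (1 - z * conj z) ^ 3 := by
  have hloc : wdbar (mixedW s) =ᶠ[nhds z] fun w => (1 + s * w ^ 2) / (1 - w * conj w) ^ 2 :=
    Filter.eventually_of_mem (isOpen_ball.mem_nhds hz) fun w hw => wdbar_mixedW s hw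
  have hnum := (hasFDerivAt_wirtinger_const 1 z).wirtinger_add
    ((hasFDerivAt_wirtinger_const s z).wirtinger_mul ((hasFDerivAt_wirtinger_id z).wirtinger_pow 2))
  have hD := one_sub_mul_conj_ne_zero hz
  have h := hnum.wirtinger_div ((hasFDerivAt_one_sub_mul_conj z).wirtinger_pow 2) (pow_ne_zero 2 hD)
  rw [wd, hloc.fderiv_eq, ← wd, h.wd_eq]
  field_simp
  ring

end MixedW

lemma mixedW_eq (s z : ℂ) : mixedW s z = (s * z + conj z) / (1 - (normSq z : ℂ)) := by
  rw [mixedW, mul_conj]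

lemma one_add_normSq_mixedW_add_normSq_mixedW {z : ℂ} (hz : z ∈ ball (0 : ℂ) 1) :
    1 + (normSq (mixedW 1 z) : ℂ) + normSq (mixedW (-1) z)
      = (1 + z * conj z) ^ 2 / (1 - z * conj z) ^ 2 := by
  have hD := one_sub_mul_conj_ne_zero hz
  have hD' : 1 - conj z * z ≠ 0 := by rwa [mul_comm]
  rw [← mul_conj, ← mul_conj]
  simp only [mixedW, map_div₀, map_add, map_sub, map_mul, map_one, map_neg, conj_conj]
  field_simp
  ring

/-- The pair `W₁ = (ξ + conj ξ)/(1 − |ξ|²)`, `W₂ = (conj ξ − ξ)/(1 − |ξ|²)` on the open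
unit disc is a (mixed) solution of the `ℂP²` sigma model Euler–Lagrange equations. -/
theorem mixed_solution_CP2 (W₁ W₂ : ℂ → ℂ)
    (hW₁ : W₁ = fun ξ => (ξ + (starRingEnd ℂ) ξ) / (1 - (Complex.normSq ξ : ℂ)))
    (hW₂ : W₂ = fun ξ => ((starRingEnd ℂ) ξ - ξ) / (1 - (Complex.normSq ξ : ℂ)))
    (A : ℂ → ℂ)
    (hA : A = fun ξ => 1 + (Complex.normSq (W₁ ξ) : ℂ) + (Complex.normSq (W₂ ξ) : ℂ)) :
    ∀ ξ ∈ Metric.ball (0 : ℂ) 1,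
      wd (fun z => wdbar W₁ z) ξ
          - (2 * (starRingEnd ℂ) (W₁ ξ) / A ξ) * wd W₁ ξ * wdbar W₁ ξ
          - ((starRingEnd ℂ) (W₂ ξ) / A ξ)
            * (wd W₁ ξ * wdbar W₂ ξ + wdbar W₁ ξ * wd W₂ ξ) = 0 ∧
      wd (fun z => wdbar W₂ z) ξ
          - (2 * (starRingEnd ℂ) (W₂ ξ) / A ξ) * wd W₂ ξ * wdbar W₂ ξ
          - ((starRingEnd ℂ) (W₁ ξ) / A ξ)
            * (wd W₁ ξ * wdbar W₂ ξ + wdbar W₁ ξ * wd W₂ ξ) = 0 := by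
  obtain rfl : W₁ = mixedW 1 := by
    rw [hW₁]; funext z; rw [mixedW_eq, one_mul]
  obtain rfl : W₂ = mixedW (-1) := by
    rw [hW₂]; funext z; rw [mixedW_eq, neg_one_mul, neg_add_eq_sub]
  subst hA
  intro ξ hξ
  have hD := one_sub_mul_conj_ne_zero hξ
  have hP := one_add_mul_conj_ne_zero ξ
  simp only [one_add_normSq_mixedW_add_normSq_mixedW hξ]
  simp only [wd_wdbar_mixedW _ hξ, wd_mixedW _ hξ, wdbar_mixedW _ hξ, mixedW, map_div₀,
    map_add, map_sub, map_mul, map_one, map_neg, conj_conj]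
  constructor
  · field_simp
    ring
  · field_simp
    ring
end
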